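/- Let W be a 3-dimensional linear subspace of ℝ⁷ that is closed under the cross product determined by φ₀. Then the restriction of φ₀ to W is 2-nondegenerate: for any linearly independent w₁, w₂ ∈ W there exists w ∈ W with φ₀(w₁, w₂, w) ≠ 0; in particular W ∩ W_I^{⊥,2} = {0}, i.e. W is 2-multisymplectic. -/

import Mathlib

/-!
For linearly independent `w₁, w₂` the cross product `w₁ × w₂` is nonzero by the Lagrange
identity `|u × v|² = |u|²|v|² - ⟨u, v⟩²`, and cross-closedness of `W` says that `w₁ × w₂` is
orthogonal to `Wᗮ`, i.e. lies in `Wᗮᗮ = W`. So `w = w₁ × w₂` gives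
`φ₀(w₁, w₂, w) = |w₁ × w₂|² > 0`. As `dim W > 1`, every nonzero `v ∈ W` belongs to an
independent pair in `W`, hence is not in `W_I^{⊥,2}`.
-/

open Module

/-- The exterior 3-form `dxᵃ ∧ dxᵇ ∧ dxᶜ` on `ℝ⁷`. -/
noncomputable def dx3 (a b c : Fin 7) : (Fin 7 → ℝ) [⋀^Fin 3]→ₗ[ℝ] ℝ :=
  (Matrix.detRowAlternating : (Fin 3 → ℝ) [⋀^Fin 3]→ₗ[ℝ] ℝ).compLinearMap
    (LinearMap.funLeft ℝ ℝ ![a, b, c])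

/-- The standard `G₂` 3-form
`φ₀ = dx¹²³ + dx¹⁴⁵ + dx¹⁶⁷ + dx²⁴⁶ − dx²⁵⁷ − dx³⁴⁷ − dx³⁵⁶` on `ℝ⁷`
(with indices shifted to `0, …, 6`). -/
noncomputable def phi0 : (Fin 7 → ℝ) [⋀^Fin 3]→ₗ[ℝ] ℝ :=
  dx3 0 1 2 + dx3 0 3 4 + dx3 0 5 6 + dx3 1 3 5 - dx3 1 4 6 - dx3 2 3 6 - dx3 2 4 5

/-- The Type-I 1st orthogonal complement of `W ⊆ ℝ⁷` with respect to `φ₀`. -/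
def WIperp1 (W : Submodule ℝ (Fin 7 → ℝ)) : Set (Fin 7 → ℝ) :=
  {v | ∀ w ∈ W, ∀ u : Fin 7 → ℝ, phi0 ![v, w, u] = 0}

/-- The Type-I 2nd orthogonal complement of `W ⊆ ℝ⁷` with respect to `φ₀`. -/
def WIperp2 (W : Submodule ℝ (Fin 7 → ℝ)) : Set (Fin 7 → ℝ) :=
  {v | ∀ w₁ ∈ W, ∀ w₂ ∈ W, phi0 ![v, w₁, w₂] = 0}

/-- `U` is closed under the cross product determined by `φ₀`: for all `u, v ∈ U`
and every `z` orthogonal to `U` (w.r.t. the standard inner product),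
`φ₀ (u, v, z) = 0`, i.e. `u × v ∈ U`. -/
def CrossClosed (U : Submodule ℝ (Fin 7 → ℝ)) : Prop :=
  ∀ u ∈ U, ∀ v ∈ U, ∀ z : Fin 7 → ℝ, (∀ x ∈ U, ∑ i, z i * x i = 0) → phi0 ![u, v, z] = 0

open Matrix

lemma dx3_apply (a b c : Fin 7) (u v w : Fin 7 → ℝ) :
    dx3 a b c ![u, v, w] = u a * v b * w c - u a * v c * w b - u b * v a * w c
      + u b * v c * w a + u c * v a * w b - u c * v b * w a := by
  change Matrix.det (Matrix.of fun i j => ![u, v, w] i (![a, b, c] j)) = _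
  simp [Matrix.det_fin_three]

def cross7 (u v : Fin 7 → ℝ) : Fin 7 → ℝ
  | 0 => u 1*v 2 - u 2*v 1 + u 3*v 4 - u 4*v 3 + u 5*v 6 - u 6*v 5
  | 1 => u 2*v 0 - u 0*v 2 + u 3*v 5 - u 5*v 3 - u 4*v 6 + u 6*v 4
  | 2 => u 0*v 1 - u 1*v 0 - u 3*v 6 + u 6*v 3 - u 4*v 5 + u 5*v 4
  | 3 => u 4*v 0 - u 0*v 4 + u 5*v 1 - u 1*v 5 - u 6*v 2 + u 2*v 6
  | 4 => u 0*v 3 - u 3*v 0 - u 6*v 1 + u 1*v 6 - u 5*v 2 + u 2*v 5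
  | 5 => u 6*v 0 - u 0*v 6 + u 1*v 3 - u 3*v 1 - u 2*v 4 + u 4*v 2
  | 6 => u 0*v 5 - u 5*v 0 - u 1*v 4 + u 4*v 1 - u 2*v 3 + u 3*v 2

lemma phi0_apply (u v w : Fin 7 → ℝ) : phi0 ![u, v, w] = cross7 u v ⬝ᵥ w := by
  simp only [phi0, AlternatingMap.sub_apply, AlternatingMap.add_apply, dx3_apply, dotProduct,
    Fin.sum_univ_seven, cross7]
  ring

lemma cross7_dotProduct_self (u v : Fin 7 → ℝ) :
    cross7 u v ⬝ᵥ cross7 u v = (u ⬝ᵥ u) * (v ⬝ᵥ v) - (u ⬝ᵥ v) ^ 2 := by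
  simp only [dotProduct, Fin.sum_univ_seven, cross7]
  ring

lemma dotProduct_sq_lt_of_linearIndependent {ι : Type*} [Fintype ι] {u v : ι → ℝ}
    (h : LinearIndependent ℝ ![u, v]) : (u ⬝ᵥ v) ^ 2 < (u ⬝ᵥ u) * (v ⬝ᵥ v) := by
  have hu : 0 < u ⬝ᵥ u := by
    refine lt_of_le_of_ne (dotProduct_self_star_nonneg u) (Ne.symm ?_)
    rw [Ne, dotProduct_self_eq_zero]
    simpa using h.ne_zero 0
  -- the vector `(u ⬝ u) v - (u ⬝ v) u` is nonzero, and its squared length is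
  -- `(u ⬝ u) ((u ⬝ u) (v ⬝ v) - (u ⬝ v)²)`
  set w := (u ⬝ᵥ u) • v - (u ⬝ᵥ v) • u with hw
  have hw0 : w ≠ 0 := by
    intro h0
    have := LinearIndependent.pair_iff.mp h (-(u ⬝ᵥ v)) (u ⬝ᵥ u)
      (by rw [neg_smul, ← h0, hw]; abel)
    exact hu.ne' this.2
  have hww : w ⬝ᵥ w = (u ⬝ᵥ u) * ((u ⬝ᵥ u) * (v ⬝ᵥ v) - (u ⬝ᵥ v) ^ 2) := by
    simp only [hw, sub_dotProduct, dotProduct_sub, smul_dotProduct, dotProduct_smul,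
      smul_eq_mul, dotProduct_comm v u]
    ring
  have hwpos : 0 < w ⬝ᵥ w :=
    lt_of_le_of_ne (dotProduct_self_star_nonneg w) (Ne.symm (by rwa [Ne, dotProduct_self_eq_zero]))
  rw [hww] at hwpos
  linarith [pos_of_mul_pos_right hwpos hu.le]

lemma mem_of_forall_dotProduct_eq_zero {ι : Type*} [Fintype ι] {W : Submodule ℝ (ι → ℝ)}
    {c : ι → ℝ} (h : ∀ z, (∀ x ∈ W, z ⬝ᵥ x = 0) → c ⬝ᵥ z = 0) : c ∈ W := by
  let W' := W.comap (WithLp.linearEquiv 2 ℝ (ι → ℝ)).toLinearMap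
  change WithLp.toLp 2 c ∈ W'
  rw [← W'.orthogonal_orthogonal, Submodule.mem_orthogonal']
  intro z hz
  rw [EuclideanSpace.inner_eq_star_dotProduct, star_trivial, dotProduct_comm]
  refine h z.ofLp fun x hx => ?_
  rw [Submodule.mem_orthogonal'] at hz
  simpa [EuclideanSpace.inner_eq_star_dotProduct, dotProduct_comm] using hz (WithLp.toLp 2 x) hx

lemma CrossClosed.cross7_mem {U : Submodule ℝ (Fin 7 → ℝ)} (hU : CrossClosed U) {u v : Fin 7 → ℝ}
    (hu : u ∈ U) (hv : v ∈ U) : cross7 u v ∈ U :=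
  mem_of_forall_dotProduct_eq_zero fun z hz => by
    rw [← phi0_apply]
    exact hU u hu v hv z hz

def IsTwoNondegenerate (W : Submodule ℝ (Fin 7 → ℝ)) : Prop :=
  ∀ w₁ w₂ : Fin 7 → ℝ, w₁ ∈ W → w₂ ∈ W → LinearIndependent ℝ ![w₁, w₂] →
    ∃ w ∈ W, phi0 ![w₁, w₂, w] ≠ 0

lemma CrossClosed.isTwoNondegenerate {U : Submodule ℝ (Fin 7 → ℝ)} (hU : CrossClosed U) :
    IsTwoNondegenerate U := by
  intro u v hu hv huv
  refine ⟨cross7 u v, hU.cross7_mem hu hv, ?_⟩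
  rw [phi0_apply, cross7_dotProduct_self]
  exact (sub_pos.2 (dotProduct_sq_lt_of_linearIndependent huv)).ne'

lemma IsTwoNondegenerate.inter_WIperp2_eq_zero {W : Submodule ℝ (Fin 7 → ℝ)}
    (hnd : IsTwoNondegenerate W) (hW : 1 < finrank ℝ W) :
    (W : Set (Fin 7 → ℝ)) ∩ WIperp2 W = {0} := by
  ext v
  constructor
  · rintro ⟨hvW, hv⟩
    by_contra hv0
    obtain ⟨y, hy⟩ := exists_linearIndependent_pair_of_one_lt_finrank hW
      (x := ⟨v, hvW⟩) (by simpa using hv0)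
    have hind : LinearIndependent ℝ ![v, (y : Fin 7 → ℝ)] := by
      have := hy.map' W.subtype W.ker_subtype
      rwa [← FinVec.map_eq] at this
    obtain ⟨w, hw, hne⟩ := hnd v y hvW y.2 hind
    exact hne (hv y y.2 w hw)
  · rintro rfl
    exact ⟨W.zero_mem, fun _ _ _ _ => phi0.map_coord_zero 0 rfl⟩

/-- if `W` is a 3-dimensional subspace of `ℝ⁷` closed under the cross
product determined by `φ₀`, then `φ₀|_W` is 2-nondegenerate (every linearly independent
pair `w₁, w₂ ∈ W` pairs nontrivially with some `w ∈ W`); in particular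
`W ∩ W_I^{⊥,2} = {0}`, i.e. `W` is 2-multisymplectic. -/
theorem g2_dim_three_cross_closed_multisymplectic (W : Submodule ℝ (Fin 7 → ℝ))
    (hW : Module.finrank ℝ W = 3) (hclosed : CrossClosed W) :
    (∀ w₁ w₂ : Fin 7 → ℝ, w₁ ∈ W → w₂ ∈ W → LinearIndependent ℝ ![w₁, w₂] →
      ∃ w ∈ W, phi0 ![w₁, w₂, w] ≠ 0) ∧
    (W : Set (Fin 7 → ℝ)) ∩ WIperp2 W = {0} := by
  have hnd := hclosed.isTwoNondegenerate
  exact ⟨hnd, hnd.inter_WIperp2_eq_zero (by omega)⟩
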